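/- arXiv:1612.01329 — 4 statements merged into one kernel-verified Lean document; each statement's English description precedes it below -/
import Mathlib

section
/- For every w ∈ ℂ with 0 < |w| < 1, the number z = 2 − w − w⁻¹ belongs to the resolvent set of H₀ acting on ℓ²(ℕ), i.e. H₀ − z is boundedly invertible, and the matrix elements of the resolvent are ⟨e_n, (H₀ − z)⁻¹ e_m⟩ = (w/(1 − w²))·(w^{|n−m|} − w^{n+m}) for all n, m ≥ 1. -/
noncomputable section

/-- Complex sequences indexed by ℕ = {1,2,…}. -/
abbrev NSeq : Type := ℕ+ → ℂ

/-- The Dirichlet Laplacian on the discrete half-line. -/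
def H0seq (x : NSeq) : NSeq :=
  fun n => 2 * x n - x (n + 1) - (if n = 1 then 0 else x (n - 1))

/-- The Hilbert space ℓ²(ℕ). -/
abbrev l2 : Type := lp (fun _ : ℕ+ => ℂ) 2

namespace DRK

open scoped ComplexConjugate

lemma succ_inj : Function.Injective (fun n : ℕ+ => n + 1) := by
  intro a b h
  simpa using h

lemma succ_ne_one (n : ℕ+) : n + 1 ≠ 1 := by
  intro h
  have h2 : ((n + 1 : ℕ+) : ℕ) = 1 := by rw [h]; rfl
  rw [PNat.add_coe, PNat.one_coe] at h2
  have := n.pos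
  omega

lemma not_mem_range_succ (n : ℕ+) (h : n ∉ Set.range (fun m : ℕ+ => m + 1)) : n = 1 := by
  by_contra hn
  obtain ⟨k, rfl⟩ := PNat.exists_eq_succ_of_ne_one hn
  exact h ⟨k, rfl⟩

lemma summable_sq (x : l2) : Summable fun n : ℕ+ => ‖x n‖ ^ (2:ℝ) := by
  have := lp.memℓp x
  rw [memℓp_gen_iff (by norm_num)] at this
  convert this using 2 <;> simp

/-- Build an element of `l2` from a square-summable sequence. -/
def mk2 (f : NSeq) (h : Summable fun n => ‖f n‖ ^ (2:ℝ)) : l2 :=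
  ⟨f, memℓp_gen (by convert h using 2 <;> simp)⟩

@[simp] lemma mk2_apply (f : NSeq) (h) (n : ℕ+) : (mk2 f h : NSeq) n = f n := rfl

lemma norm_sq_eq (x : l2) : ‖x‖ ^ (2:ℝ) = ∑' n : ℕ+, ‖x n‖ ^ (2:ℝ) := by
  have := lp.norm_rpow_eq_tsum (p := 2) (by norm_num) x
  convert this using 2 <;> simp

lemma norm_le_norm_of_sq {y x : l2}
    (h : ∑' n : ℕ+, ‖y n‖ ^ (2:ℝ) ≤ ∑' n : ℕ+, ‖x n‖ ^ (2:ℝ)) : ‖y‖ ≤ ‖x‖ := by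
  have h2 : ‖y‖ ^ (2:ℝ) ≤ ‖x‖ ^ (2:ℝ) := by rw [norm_sq_eq, norm_sq_eq]; exact h
  have hy0 := norm_nonneg y
  have hx0 := norm_nonneg x
  rw [show ((2:ℝ)) = ((2:ℕ):ℝ) by norm_num, Real.rpow_natCast, Real.rpow_natCast] at h2
  nlinarith

/-- The left shift operator. -/
def Lop : l2 →L[ℂ] l2 :=
  LinearMap.mkContinuous
    { toFun := fun x => mk2 (fun n => x (n + 1)) ((summable_sq x).comp_injective succ_inj)
      map_add' := fun x y => lp.ext (funext fun n => by
        simp [lp.coeFn_add, Pi.add_apply])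
      map_smul' := fun c x => lp.ext (funext fun n => by
        simp [lp.coeFn_smul, Pi.smul_apply]) }
    1
    (fun x => by
      rw [one_mul]
      refine norm_le_norm_of_sq ?_
      exact ((summable_sq x).comp_injective succ_inj).tsum_le_tsum_of_inj (fun n : ℕ+ => n + 1) succ_inj
        (fun c _ => by positivity) (fun n => le_rfl)
        (summable_sq x))

@[simp] lemma Lop_apply (x : l2) (n : ℕ+) : (Lop x : NSeq) n = x (n + 1) := rfl

def Tfun (x : NSeq) : NSeq := fun n => if n = 1 then 0 else x (n - 1)

lemma Tfun_succ (x : NSeq) (n : ℕ+) : Tfun x (n + 1) = x n := by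
  rw [Tfun]
  simp only [if_neg (succ_ne_one n)]
  rw [PNat.add_sub]

lemma Tfun_one (x : NSeq) : Tfun x 1 = 0 := by simp [Tfun]

lemma summable_Tfun_sq (x : l2) : Summable fun n : ℕ+ => ‖Tfun (⇑x) n‖ ^ (2:ℝ) := by
  rw [← Function.Injective.summable_iff succ_inj
    (f := fun n : ℕ+ => ‖Tfun (⇑x) n‖ ^ (2:ℝ))
    (fun a ha => by simp [not_mem_range_succ a ha, Tfun_one, Real.zero_rpow])]
  have : ((fun n : ℕ+ => ‖Tfun (⇑x) n‖ ^ (2:ℝ)) ∘ (fun m : ℕ+ => m + 1))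
      = fun n : ℕ+ => ‖x n‖ ^ (2:ℝ) := by
    funext n; simp [Function.comp, Tfun_succ]
  rw [this]
  exact summable_sq x

lemma tsum_Tfun_sq (x : l2) :
    ∑' n : ℕ+, ‖Tfun (⇑x) n‖ ^ (2:ℝ) = ∑' n : ℕ+, ‖x n‖ ^ (2:ℝ) := by
  rw [← Function.Injective.tsum_eq succ_inj
    (f := fun n : ℕ+ => ‖Tfun (⇑x) n‖ ^ (2:ℝ))
    (by
      intro a ha
      by_contra hc
      have h1 := not_mem_range_succ a hc
      rw [Function.mem_support, h1, Tfun_one] at ha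
      simp [Real.zero_rpow] at ha)]
  exact tsum_congr fun n => by simp [Tfun_succ]

/-- The right shift operator (with Dirichlet condition). -/
def Top : l2 →L[ℂ] l2 :=
  LinearMap.mkContinuous
    { toFun := fun x => mk2 (Tfun ⇑x) (summable_Tfun_sq x)
      map_add' := fun x y => lp.ext (funext fun n => by
        simp only [mk2_apply, lp.coeFn_add, Pi.add_apply, Tfun]
        split_ifs <;> simp)
      map_smul' := fun c x => lp.ext (funext fun n => by
        simp only [mk2_apply, lp.coeFn_smul, Pi.smul_apply, Tfun, RingHom.id_apply]
        split_ifs <;> simp) }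
    1
    (fun x => by
      rw [one_mul]
      exact norm_le_norm_of_sq (le_of_eq (tsum_Tfun_sq x)))

@[simp] lemma Top_apply (x : l2) (n : ℕ+) : (Top x : NSeq) n = Tfun (⇑x) n := rfl

end DRK
namespace DRK

lemma summable_pow_sq {u : ℂ} (hu : ‖u‖ < 1) :
    Summable fun n : ℕ+ => ‖u ^ (n : ℕ)‖ ^ (2:ℝ) := by
  have hgeo : Summable fun k : ℕ => (‖u‖ ^ 2) ^ k := by
    apply summable_geometric_of_lt_one (by positivity)
    nlinarith [norm_nonneg u]
  have h2 : Summable ((fun k : ℕ => (‖u‖ ^ 2) ^ k) ∘ (fun n : ℕ+ => (n : ℕ))) :=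
    hgeo.comp_injective PNat.coe_injective
  refine h2.congr fun n => ?_
  simp only [Function.comp, norm_pow]
  rw [show ((2:ℝ)) = ((2:ℕ):ℝ) by norm_num, Real.rpow_natCast]
  ring

variable {w : ℂ}

/-- The vector with coordinates `w^n`. -/
def vW (hw1 : ‖w‖ < 1) : l2 := mk2 (fun n => w ^ (n : ℕ)) (summable_pow_sq hw1)

/-- The vector with coordinates `conj w ^ n`. -/
def vWbar (hw1 : ‖w‖ < 1) : l2 :=
  mk2 (fun n => (starRingEnd ℂ) w ^ (n : ℕ))
    (summable_pow_sq (by rwa [RCLike.norm_conj]))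

/-- The rank-one operator `x ↦ (∑ w^m x m) • vW`. -/
def Bop (hw1 : ‖w‖ < 1) : l2 →L[ℂ] l2 :=
  (innerSL ℂ (vWbar hw1)).smulRight (vW hw1)

lemma Bop_single (hw1 : ‖w‖ < 1) (m n : ℕ+) :
    ((Bop hw1) (lp.single 2 m (1:ℂ)) : NSeq) n = w ^ (m:ℕ) * w ^ (n:ℕ) := by
  have h1 : (inner ℂ (vWbar hw1) (lp.single 2 m (1:ℂ)) : ℂ) = w ^ (m:ℕ) := by
    rw [lp.inner_single_right]
    simp [vWbar, RCLike.inner_apply]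
  show ((innerSL ℂ (vWbar hw1)) (lp.single 2 m (1:ℂ)) • (vW hw1) : l2) n = _
  rw [lp.coeFn_smul, Pi.smul_apply]
  simp only [innerSL_apply_apply, h1, smul_eq_mul]
  rfl

lemma x_congr (x : l2) {a b : ℕ+} (h : (a : ℕ) = (b : ℕ)) : (x : NSeq) a = x b := by
  rw [PNat.coe_injective h]

lemma Lop_pow_apply (k : ℕ) (x : l2) (n : ℕ+) :
    ((Lop ^ k) x : NSeq) n = x ⟨(n : ℕ) + k, by have := n.pos; omega⟩ := by
  induction k generalizing n with
  | zero =>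
    simp only [pow_zero, ContinuousLinearMap.one_apply]
    exact x_congr x (by simp only [PNat.mk_coe]; omega)
  | succ k ih =>
    rw [pow_succ', ContinuousLinearMap.mul_apply, Lop_apply, ih]
    exact x_congr x (by simp only [PNat.mk_coe, PNat.add_coe, PNat.one_coe]; omega)

lemma Top_pow_apply (k : ℕ) (x : l2) (n : ℕ+) :
    ((Top ^ k) x : NSeq) n =
      if h : k < (n : ℕ) then x ⟨(n : ℕ) - k, by omega⟩ else 0 := by
  induction k generalizing n with
  | zero =>
    rw [dif_pos n.pos]
    simp only [pow_zero, ContinuousLinearMap.one_apply]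
    exact x_congr x (by simp only [PNat.mk_coe]; omega)
  | succ k ih =>
    rw [pow_succ', ContinuousLinearMap.mul_apply, Top_apply]
    rcases eq_or_ne n 1 with rfl | hn
    · rw [Tfun_one]
      rw [dif_neg]
      simp
    · rw [Tfun, if_neg hn, ih]
      obtain ⟨p, rfl⟩ := PNat.exists_eq_succ_of_ne_one hn
      have hsub : p + 1 - 1 = p := PNat.add_sub
      rw [hsub]
      have hco : ((p + 1 : ℕ+) : ℕ) = (p : ℕ) + 1 := by simp
      by_cases hk : k < (p : ℕ)
      · rw [dif_pos hk, dif_pos (by omega)]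
        exact x_congr x (by simp only [PNat.mk_coe, PNat.add_coe, PNat.one_coe]; omega)
      · rw [dif_neg hk, dif_neg (by omega)]

end DRK
namespace DRK

variable {w : ℂ}

lemma norm_op_pow_le_one {A : l2 →L[ℂ] l2} (hA : ‖A‖ ≤ 1) (k : ℕ) : ‖A ^ k‖ ≤ 1 := by
  rcases Nat.eq_zero_or_pos k with rfl | hk
  · rw [pow_zero]
    exact ContinuousLinearMap.norm_id_le
  · calc ‖A ^ k‖ ≤ ‖A‖ ^ k := norm_pow_le' A hk
    _ ≤ 1 ^ k := pow_le_pow_left₀ (norm_nonneg A) hA k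
    _ = 1 := one_pow k

lemma norm_Lop_le : ‖Lop‖ ≤ 1 := LinearMap.mkContinuous_norm_le _ zero_le_one _

lemma norm_Top_le : ‖Top‖ ≤ 1 := LinearMap.mkContinuous_norm_le _ zero_le_one _

lemma summable_S1 (hw1 : ‖w‖ < 1) : Summable fun k : ℕ => w ^ k • (Lop ^ k) := by
  refine Summable.of_norm_bounded (g := fun k => ‖w‖ ^ k)
    (summable_geometric_of_lt_one (norm_nonneg w) hw1) (fun k => ?_)
  rw [norm_smul (w ^ k) (Lop ^ k), norm_pow]
  calc ‖w‖ ^ k * ‖Lop ^ k‖ ≤ ‖w‖ ^ k * 1 :=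
        mul_le_mul_of_nonneg_left (norm_op_pow_le_one norm_Lop_le k) (by positivity)
    _ = ‖w‖ ^ k := mul_one _

lemma summable_S2 (hw1 : ‖w‖ < 1) : Summable fun k : ℕ => w ^ (k + 1) • (Top ^ (k + 1)) := by
  refine Summable.of_norm_bounded (g := fun k => ‖w‖ ^ (k + 1))
    (by
      have := (summable_geometric_of_lt_one (norm_nonneg w) hw1).mul_left ‖w‖
      refine this.congr fun k => ?_
      rw [pow_succ, mul_comm])
    (fun k => ?_)
  rw [norm_smul (w ^ (k+1)) (Top ^ (k+1)), norm_pow]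
  calc ‖w‖ ^ (k+1) * ‖Top ^ (k+1)‖ ≤ ‖w‖ ^ (k+1) * 1 :=
        mul_le_mul_of_nonneg_left (norm_op_pow_le_one norm_Top_le (k+1)) (by positivity)
    _ = ‖w‖ ^ (k+1) := mul_one _

/-- The resolvent operator. -/
def Rop (hw1 : ‖w‖ < 1) : l2 →L[ℂ] l2 :=
  (w / (1 - w ^ 2)) •
    ((∑' k : ℕ, w ^ k • (Lop ^ k)) + (∑' k : ℕ, w ^ (k + 1) • (Top ^ (k + 1))) - Bop hw1)

/-- The resolvent kernel. -/
def Kc (w : ℂ) (a b : ℕ) : ℂ :=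
  w / (1 - w ^ 2) * (w ^ ((a : ℤ) - (b : ℤ)).natAbs - w ^ (a + b))

lemma Kc_symm (a b : ℕ) : Kc w a b = Kc w b a := by
  unfold Kc
  rw [show ((a:ℤ) - b).natAbs = ((b:ℤ) - a).natAbs by omega, add_comm a b]

/-- Evaluation at `x` as an additive monoid hom. -/
def evalAM (x : l2) : (l2 →L[ℂ] l2) →+ l2 where
  toFun T := T x
  map_zero' := rfl
  map_add' T S := rfl

/-- Coordinate evaluation as an additive monoid hom. -/
def coordAM (n : ℕ+) : l2 →+ ℂ where
  toFun y := y n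
  map_zero' := rfl
  map_add' y z := by
    show ((y + z : l2) : NSeq) n = ((y : NSeq) n) + ((z : NSeq) n)
    rw [lp.coeFn_add, Pi.add_apply]

lemma continuous_coordAM (n : ℕ+) : Continuous (coordAM n) := by
  have h1 : Continuous fun y : l2 => (y : NSeq) :=
    (lp.uniformContinuous_coe (p := 2)).continuous
  exact (continuous_apply n).comp h1

lemma tsum_op_coord {A : ℕ → l2 →L[ℂ] l2} (hA : Summable A) (x : l2) (n : ℕ+) :
    (((∑' k, A k) x : l2) : NSeq) n = ∑' k, ((A k x : l2) : NSeq) n := by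
  have h1 : HasSum (fun k => A k x) ((∑' k, A k) x) :=
    hA.hasSum.map (evalAM x)
      (by show Continuous fun T : l2 →L[ℂ] l2 => T x; continuity)
  have h2 : HasSum (fun k => ((A k x : l2) : NSeq) n) ((((∑' k, A k) x : l2) : NSeq) n) :=
    h1.map (coordAM n) (continuous_coordAM n)
  exact h2.tsum_eq.symm

lemma single_coord (m n : ℕ+) :
    ((lp.single 2 m (1:ℂ) : l2) : NSeq) n = if (n : ℕ) = (m : ℕ) then 1 else 0 := by
  rcases eq_or_ne n m with rfl | h
  · rw [lp.single_apply_self, if_pos rfl]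
  · rw [lp.single_apply_ne 2 m _ h, if_neg (fun hc => h (PNat.coe_injective hc))]

lemma Rop_single (hw1 : ‖w‖ < 1) (m n : ℕ+) :
    ((Rop hw1 (lp.single 2 m (1:ℂ)) : l2) : NSeq) n = Kc w (n : ℕ) (m : ℕ) := by
  set e : l2 := lp.single 2 m (1:ℂ)
  have hS1 : (((∑' k : ℕ, w ^ k • (Lop ^ k)) e : l2) : NSeq) n
      = (if (n:ℕ) ≤ (m:ℕ) then w ^ ((m:ℕ) - (n:ℕ)) else 0) := by
    rw [tsum_op_coord (summable_S1 hw1)]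
    have hterm : ∀ k : ℕ, (((w ^ k • (Lop ^ k)) e : l2) : NSeq) n
        = if (n:ℕ) + k = (m:ℕ) then w ^ k else 0 := by
      intro k
      rw [ContinuousLinearMap.smul_apply, lp.coeFn_smul, Pi.smul_apply, Lop_pow_apply]
      erw [single_coord m ⟨(n:ℕ) + k, by have := n.pos; omega⟩]
      show w ^ k • (if (n:ℕ) + k = (m:ℕ) then (1:ℂ) else 0) = _
      simp only [PNat.mk_coe, smul_eq_mul]
      split_ifs <;> simp
    rw [tsum_congr hterm]
    by_cases h : (n:ℕ) ≤ (m:ℕ)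
    · rw [if_pos h, tsum_eq_single ((m:ℕ) - (n:ℕ))
        (fun k hk => by rw [if_neg (by omega)]), if_pos (by omega)]
    · rw [if_neg h]
      exact tsum_eq_single 0 (fun k hk => by rw [if_neg (by omega)]) |>.trans
        (by rw [if_neg (by omega)])
  have hS2 : (((∑' k : ℕ, w ^ (k + 1) • (Top ^ (k + 1))) e : l2) : NSeq) n
      = (if (m:ℕ) < (n:ℕ) then w ^ ((n:ℕ) - (m:ℕ)) else 0) := by
    rw [tsum_op_coord (summable_S2 hw1)]
    have hterm : ∀ k : ℕ, (((w ^ (k+1) • (Top ^ (k+1))) e : l2) : NSeq) n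
        = if (n:ℕ) = (m:ℕ) + (k+1) then w ^ (k+1) else 0 := by
      intro k
      rw [ContinuousLinearMap.smul_apply, lp.coeFn_smul, Pi.smul_apply, Top_pow_apply]
      by_cases h : k + 1 < (n:ℕ)
      · rw [dif_pos h]
        erw [single_coord m ⟨(n:ℕ) - (k + 1), by omega⟩]
        show w ^ (k + 1) • (if (n:ℕ) - (k + 1) = (m:ℕ) then (1:ℂ) else 0) = _
        simp only [PNat.mk_coe, smul_eq_mul]
        split_ifs with h1 h2 h2 <;> first | (exfalso; omega) | simp
      · rw [dif_neg h, if_neg (by have := m.pos; omega)]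
        simp
    rw [tsum_congr hterm]
    by_cases h : (m:ℕ) < (n:ℕ)
    · rw [if_pos h, tsum_eq_single ((n:ℕ) - (m:ℕ) - 1)
        (fun k hk => by rw [if_neg (by omega)]), if_pos (by omega)]
      congr 1
      omega
    · rw [if_neg h]
      exact tsum_eq_single 0 (fun k hk => by rw [if_neg (by omega)]) |>.trans
        (by rw [if_neg (by omega)])
  have hB := Bop_single hw1 m n
  unfold Rop
  rw [ContinuousLinearMap.smul_apply, lp.coeFn_smul, Pi.smul_apply]
  rw [ContinuousLinearMap.sub_apply, ContinuousLinearMap.add_apply, lp.coeFn_sub,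
    lp.coeFn_add, Pi.sub_apply, Pi.add_apply, hS1, hS2, hB]
  unfold Kc
  rw [smul_eq_mul]
  congr 1
  by_cases h : (n:ℕ) ≤ (m:ℕ)
  · rw [if_pos h, if_neg (by omega)]
    rw [show (((n:ℕ):ℤ) - ((m:ℕ):ℤ)).natAbs = (m:ℕ) - (n:ℕ) by omega]
    ring
  · rw [if_neg h, if_pos (by omega)]
    rw [show (((n:ℕ):ℤ) - ((m:ℕ):ℤ)).natAbs = (n:ℕ) - (m:ℕ) by omega]
    ring

end DRK
namespace DRK

variable {w : ℂ}

lemma natAbs_eq (a b e : ℕ) (h : a + e = b ∨ b + e = a) : ((a:ℤ) - b).natAbs = e := by omega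

/-- The key finite-difference identity for the kernel. -/
lemma keyc (hw0 : w ≠ 0) (hw2 : 1 - w ^ 2 ≠ 0) (a b : ℕ) (ha : 1 ≤ a) (hb : 1 ≤ b) :
    (w + w⁻¹) * Kc w a b - Kc w (a+1) b - (if a = 1 then 0 else Kc w (a-1) b)
      = if a = b then 1 else 0 := by
  unfold Kc
  rcases eq_or_ne a 1 with rfl | ha1
  · rw [if_pos rfl]
    rcases eq_or_ne b 1 with rfl | hb1
    · rw [if_pos rfl, natAbs_eq 1 1 0 (by omega), natAbs_eq (1+1) 1 1 (by omega)]
      field_simp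
      ring
    · obtain ⟨k, rfl⟩ : ∃ k, b = k + 2 := ⟨b - 2, by omega⟩
      rw [if_neg (by omega), natAbs_eq 1 (k+2) (k+1) (by omega),
        natAbs_eq (1+1) (k+2) k (by omega)]
      field_simp
      ring
  · obtain ⟨t, rfl⟩ : ∃ t, a = t + 2 := ⟨a - 2, by omega⟩
    rw [if_neg (by omega)]
    have hsub : t + 2 - 1 = t + 1 := by omega
    rw [hsub]
    rcases lt_trichotomy (t+2) b with hlt | heq | hgt
    · obtain ⟨s, rfl⟩ : ∃ s, b = t + 2 + (s + 1) := ⟨b - (t+2) - 1, by omega⟩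
      rw [if_neg (by omega), natAbs_eq (t+2) (t+2+(s+1)) (s+1) (by omega),
        natAbs_eq (t+2+1) (t+2+(s+1)) s (by omega),
        natAbs_eq (t+1) (t+2+(s+1)) (s+2) (by omega)]
      field_simp
      ring
    · obtain rfl := heq
      rw [if_pos rfl, natAbs_eq (t+2) (t+2) 0 (by omega),
        natAbs_eq (t+2+1) (t+2) 1 (by omega), natAbs_eq (t+1) (t+2) 1 (by omega)]
      field_simp
      ring
    · obtain ⟨s, rfl⟩ : ∃ s, b = s + 1 := ⟨b - 1, by omega⟩
      obtain ⟨u, rfl⟩ : ∃ u, t = s + u := ⟨t - s, by omega⟩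
      rw [if_neg (by omega), natAbs_eq (s+u+2) (s+1) (u+1) (by omega),
        natAbs_eq (s+u+2+1) (s+1) (u+2) (by omega),
        natAbs_eq (s+u+1) (s+1) u (by omega)]
      field_simp
      ring

/-- Key identity for PNat indices. -/
lemma keyp (hw0 : w ≠ 0) (hw2 : 1 - w ^ 2 ≠ 0) (n m : ℕ+) :
    (w + w⁻¹) * Kc w (n:ℕ) (m:ℕ) - Kc w ((n:ℕ)+1) (m:ℕ)
      - (if n = 1 then 0 else Kc w ((n:ℕ)-1) (m:ℕ))
      = if (n:ℕ) = (m:ℕ) then 1 else 0 := by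
  have h := keyc hw0 hw2 (n:ℕ) (m:ℕ) n.pos m.pos
  have hiff : (n = 1) ↔ ((n:ℕ) = 1) := by
    constructor
    · rintro rfl; rfl
    · intro h1; exact PNat.coe_injective h1
  by_cases h1 : n = 1
  · rw [if_pos h1, ← h, if_pos (hiff.mp h1)]
  · rw [if_neg h1, ← h, if_neg (fun hc => h1 (hiff.mpr hc))]

/-- The Dirichlet Laplacian as a bounded operator. -/
def H0op : l2 →L[ℂ] l2 := (2:ℂ) • (1 : l2 →L[ℂ] l2) - Lop - Top

lemma H0op_apply (x : l2) (n : ℕ+) : ((H0op x : l2) : NSeq) n = H0seq (⇑x) n := by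
  unfold H0op H0seq
  rw [ContinuousLinearMap.sub_apply, ContinuousLinearMap.sub_apply,
    ContinuousLinearMap.smul_apply, ContinuousLinearMap.one_apply,
    lp.coeFn_sub, Pi.sub_apply, lp.coeFn_sub, Pi.sub_apply, lp.coeFn_smul, Pi.smul_apply,
    Lop_apply, Top_apply, Tfun]
  simp [smul_eq_mul]

lemma coord_succ (hw1 : ‖w‖ < 1) (m n : ℕ+) :
    ((Rop hw1 (lp.single 2 m (1:ℂ)) : l2) : NSeq) (n + 1) = Kc w ((n:ℕ)+1) (m:ℕ) := by
  rw [Rop_single hw1 m (n+1)]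
  rfl

lemma coord_pred (hw1 : ‖w‖ < 1) (m n : ℕ+) (hn : n ≠ 1) :
    ((Rop hw1 (lp.single 2 m (1:ℂ)) : l2) : NSeq) (n - 1) = Kc w ((n:ℕ)-1) (m:ℕ) := by
  rw [Rop_single hw1 m (n-1)]
  congr 1
  rw [PNat.sub_coe, if_pos]
  · rfl
  · rcases PNat.exists_eq_succ_of_ne_one hn with ⟨k, rfl⟩
    exact PNat.lt_add_left 1 k

/-- (H₀ - z)R e_m = e_m. -/
lemma HzR_single (hw0 : w ≠ 0) (hw1 : ‖w‖ < 1) (hw2 : 1 - w ^ 2 ≠ 0) (m : ℕ+) :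
    (H0op - (2 - w - w⁻¹) • (1 : l2 →L[ℂ] l2)) (Rop hw1 (lp.single 2 m (1:ℂ)))
      = lp.single 2 m (1:ℂ) := by
  apply lp.ext
  funext n
  rw [ContinuousLinearMap.sub_apply, ContinuousLinearMap.smul_apply,
    ContinuousLinearMap.one_apply, lp.coeFn_sub, Pi.sub_apply, lp.coeFn_smul, Pi.smul_apply,
    H0op_apply]
  show (2 * _ - _ - _) - _ = _
  rw [Rop_single hw1 m n, coord_succ hw1 m n, single_coord m n]
  have hif : (if n = 1 then (0:ℂ) else (Rop hw1 (lp.single 2 m (1:ℂ)) : l2) (n - 1))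
      = (if n = 1 then 0 else Kc w ((n:ℕ)-1) (m:ℕ)) := by
    by_cases h1 : n = 1
    · rw [if_pos h1, if_pos h1]
    · rw [if_neg h1, if_neg h1, coord_pred hw1 m n h1]
  rw [hif]
  have hkey := keyp hw0 hw2 n m
  rw [smul_eq_mul]
  by_cases h1 : n = 1
  · rw [if_pos h1] at hkey ⊢
    linear_combination hkey
  · rw [if_neg h1] at hkey ⊢
    linear_combination hkey

/-- Expansion of (H₀ - z) on a basis vector. -/
lemma Hz_single (z : ℂ) (m : ℕ+) :
    (H0op - z • (1 : l2 →L[ℂ] l2)) (lp.single 2 m (1:ℂ))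
      = (2 - z) • lp.single 2 m (1:ℂ) - lp.single 2 (m+1) (1:ℂ)
        - (if m = 1 then 0 else lp.single 2 (m-1) (1:ℂ)) := by
  apply lp.ext
  funext n
  rw [ContinuousLinearMap.sub_apply, ContinuousLinearMap.smul_apply,
    ContinuousLinearMap.one_apply, lp.coeFn_sub, Pi.sub_apply, lp.coeFn_smul, Pi.smul_apply,
    H0op_apply]
  show (2 * _ - _ - _) - _ = _
  rw [lp.coeFn_sub, Pi.sub_apply, lp.coeFn_sub, Pi.sub_apply, lp.coeFn_smul, Pi.smul_apply]
  have hB : ((lp.single 2 (m+1) (1:ℂ) : l2) : NSeq) n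
      = if (n:ℕ) = (m:ℕ) + 1 then 1 else 0 := single_coord (m+1) n
  have hC : (((if m = 1 then 0 else lp.single 2 (m-1) (1:ℂ)) : l2) : NSeq) n
      = if m = 1 then 0 else (if (n:ℕ) = (m:ℕ) - 1 then 1 else 0) := by
    by_cases h2 : m = 1
    · rw [if_pos h2, if_pos h2, lp.coeFn_zero, Pi.zero_apply]
    · rw [if_neg h2, if_neg h2, single_coord (m-1) n]
      have hlt : (1:ℕ+) < m := by
        rcases PNat.exists_eq_succ_of_ne_one h2 with ⟨k, rfl⟩
        exact PNat.lt_add_left 1 k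
      have hcm : ((m - 1 : ℕ+) : ℕ) = (m:ℕ) - 1 := by
        rw [PNat.sub_coe, if_pos hlt, PNat.one_coe]
      rw [hcm]
  have hco : ((n + 1 : ℕ+) : ℕ) = (n:ℕ) + 1 := rfl
  rw [single_coord m n, single_coord m (n+1), hco, hB, hC]
  have hn1 := n.pos
  have hm1 := m.pos
  simp only [smul_eq_mul]
  by_cases h1 : n = 1
  · subst h1
    rw [if_pos rfl]
    by_cases h2 : m = 1
    · subst h2
      rw [if_pos rfl]
      norm_num
    · rw [if_neg h2]
      have h3 : 1 < (m:ℕ) := by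
        rcases PNat.exists_eq_succ_of_ne_one h2 with ⟨k, rfl⟩
        have := k.pos
        have hh : ((k + 1 : ℕ+) : ℕ) = (k:ℕ) + 1 := rfl
        omega
      have h1c : ((1:ℕ+):ℕ) = 1 := rfl
      rw [h1c]
      split_ifs <;> first | (exfalso; omega) | ring
  · rw [if_neg h1]
    have h4 : 1 < (n:ℕ) := by
      rcases PNat.exists_eq_succ_of_ne_one h1 with ⟨k, rfl⟩
      have := k.pos
      have hh : ((k + 1 : ℕ+) : ℕ) = (k:ℕ) + 1 := rfl
      omega
    have hpred : ((lp.single 2 m (1:ℂ) : l2) : NSeq) (n - 1)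
        = if (n:ℕ) - 1 = (m:ℕ) then 1 else 0 := by
      rw [single_coord m (n-1)]
      have hlt : (1:ℕ+) < n := by
        rcases PNat.exists_eq_succ_of_ne_one h1 with ⟨k, rfl⟩
        exact PNat.lt_add_left 1 k
      have hcn : ((n - 1 : ℕ+) : ℕ) = (n:ℕ) - 1 := by
        rw [PNat.sub_coe, if_pos hlt, PNat.one_coe]
      rw [hcn]
    rw [hpred]
    by_cases h2 : m = 1
    · subst h2
      rw [if_pos rfl]
      have h1c : ((1:ℕ+):ℕ) = 1 := rfl
      rw [h1c]
      split_ifs <;> first | (exfalso; omega) | ring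
    · rw [if_neg h2]
      have h3 : 1 < (m:ℕ) := by
        rcases PNat.exists_eq_succ_of_ne_one h2 with ⟨k, rfl⟩
        have := k.pos
        have hh : ((k + 1 : ℕ+) : ℕ) = (k:ℕ) + 1 := rfl
        omega
      split_ifs <;> first | (exfalso; omega) | ring

/-- R (H₀ - z) e_m = e_m. -/
lemma RHz_single (hw0 : w ≠ 0) (hw1 : ‖w‖ < 1) (hw2 : 1 - w ^ 2 ≠ 0) (m : ℕ+) :
    Rop hw1 ((H0op - (2 - w - w⁻¹) • (1 : l2 →L[ℂ] l2)) (lp.single 2 m (1:ℂ)))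
      = lp.single 2 m (1:ℂ) := by
  rw [Hz_single]
  rw [map_sub, map_sub, map_smul]
  apply lp.ext
  funext n
  rw [lp.coeFn_sub, Pi.sub_apply, lp.coeFn_sub, Pi.sub_apply, lp.coeFn_smul, Pi.smul_apply]
  rw [Rop_single hw1 m n, Rop_single hw1 (m+1) n, single_coord m n]
  have hco1 : ((m + 1 : ℕ+) : ℕ) = (m:ℕ) + 1 := by simp [PNat.add_coe]
  rw [hco1]
  have hif : ((Rop hw1 (if m = 1 then 0 else lp.single 2 (m-1) (1:ℂ)) : l2) : NSeq) n
      = if m = 1 then 0 else Kc w (n:ℕ) ((m:ℕ)-1) := by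
    by_cases h2 : m = 1
    · rw [if_pos h2, if_pos h2]
      rw [map_zero]
      rfl
    · rw [if_neg h2, if_neg h2, Rop_single hw1 (m-1) n]
      congr 1
      rw [PNat.sub_coe, if_pos]
      · rfl
      · rcases PNat.exists_eq_succ_of_ne_one h2 with ⟨k, rfl⟩
        exact PNat.lt_add_left 1 k
  rw [hif]
  have hkey := keyp hw0 hw2 m n
  rw [Kc_symm (m:ℕ) (n:ℕ), Kc_symm ((m:ℕ)+1) (n:ℕ), Kc_symm ((m:ℕ)-1) (n:ℕ)] at hkey
  have hflip : (if (m:ℕ) = (n:ℕ) then (1:ℂ) else 0) = (if (n:ℕ) = (m:ℕ) then (1:ℂ) else 0) := by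
    by_cases h : (n:ℕ) = (m:ℕ)
    · rw [if_pos h, if_pos h.symm]
    · rw [if_neg h, if_neg (fun hc => h hc.symm)]
  rw [hflip] at hkey
  rw [smul_eq_mul]
  by_cases h1 : m = 1
  · rw [if_pos h1] at hkey ⊢
    linear_combination hkey
  · rw [if_neg h1] at hkey ⊢
    linear_combination hkey

/-- Two operators agreeing on basis vectors agree. -/
lemma op_ext {A B : l2 →L[ℂ] l2}
    (h : ∀ m : ℕ+, A (lp.single 2 m (1:ℂ)) = B (lp.single 2 m (1:ℂ))) : A = B := by
  refine ContinuousLinearMap.ext fun x => ?_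
  have hx : HasSum (fun m : ℕ+ => lp.single 2 m (x m)) x :=
    lp.hasSum_single (by norm_num) x
  have hsingle : ∀ m : ℕ+, (lp.single 2 m (x m) : l2) = x m • (lp.single 2 m (1:ℂ) : l2) := fun m => by
    have h := lp.single_smul (E := fun _ : ℕ+ => ℂ) 2 m (x m) (1:ℂ)
    rw [smul_eq_mul, mul_one] at h
    exact h
  have hA : HasSum (fun m : ℕ+ => A (lp.single 2 m (x m))) (A x) := hx.mapL A
  have hB : HasSum (fun m : ℕ+ => B (lp.single 2 m (x m))) (B x) := hx.mapL B
  have heq : (fun m : ℕ+ => A (lp.single 2 m (x m)))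
      = fun m : ℕ+ => B (lp.single 2 m (x m)) := by
    funext m
    rw [hsingle m, map_smul, map_smul, h m]
  rw [heq] at hA
  exact hA.unique hB

end DRK

open DRK in
/-- For 0 < |w| < 1 and z = 2 − w − w⁻¹, the operator H₀ − z is boundedly invertible on
ℓ²(ℕ) and ⟨e_n, (H₀ − z)⁻¹ e_m⟩ = (w/(1 − w²))·(w^{|n−m|} − w^{n+m}). -/
theorem dirichlet_resolvent_kernel (w : ℂ) (hw0 : 0 < ‖w‖) (hw1 : ‖w‖ < 1) :
    ∃ H₀ : l2 →L[ℂ] l2,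
      (∀ (x : l2) (n : ℕ+), (H₀ x : NSeq) n = H0seq (x : NSeq) n) ∧
      ∃ R : l2 →L[ℂ] l2,
        (H₀ - (2 - w - w⁻¹) • 1) ∘L R = 1 ∧
        R ∘L (H₀ - (2 - w - w⁻¹) • 1) = 1 ∧
        ∀ n m : ℕ+,
          inner (𝕜 := ℂ) (lp.single 2 n (1 : ℂ)) (R (lp.single 2 m (1 : ℂ))) =
            w / (1 - w ^ 2) * (w ^ (((n : ℤ) - (m : ℤ)).natAbs) - w ^ ((n : ℕ) + (m : ℕ))) := by
  have hwne : w ≠ 0 := fun h => by simp [h] at hw0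
  have hw2 : 1 - w ^ 2 ≠ 0 := by
    intro h
    have h1 : w ^ 2 = 1 := by linear_combination -h
    have h2 : ‖w ^ 2‖ = 1 := by rw [h1, norm_one]
    rw [norm_pow] at h2
    nlinarith
  refine ⟨H0op, fun x n => H0op_apply x n, Rop hw1, ?_, ?_, ?_⟩
  · apply op_ext
    intro m
    rw [ContinuousLinearMap.comp_apply, ContinuousLinearMap.one_apply]
    exact HzR_single hwne hw1 hw2 m
  · apply op_ext
    intro m
    rw [ContinuousLinearMap.comp_apply, ContinuousLinearMap.one_apply]
    exact RHz_single hwne hw1 hw2 m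
  · intro n m
    rw [lp.inner_single_left]
    rw [Rop_single hw1 m n]
    unfold Kc
    rw [RCLike.inner_apply, map_one, mul_one]
end
end

section
/- Let V : ℕ → ℝ satisfy ∑_n (1+n)²·|V[n]| < ∞. If Ψ : ℕ → ℂ satisfies ∑_n (1+n)⁻¹·|Ψ[n]| < ∞ and (H₀Ψ)[n] + V[n]·Ψ[n] = 0 for all n ≥ 1, then Ψ = 0. (That is, for a real local potential with this decay, the perturbed Laplacian H = H₀ + V has no nonzero zero-energy eigenfunction in the weighted space ℓ^{1,−1}.) -/
noncomputable section

set_option maxHeartbeats 2000000 in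
/-- For a real local potential V with ∑ (1+n)²|V[n]| < ∞, the perturbed Laplacian
H = H₀ + V has no nonzero zero-energy eigenfunction in the weighted space ℓ^{1,−1}. -/
theorem no_eigenfunction_local_potential (V : ℕ+ → ℝ)
    (hV : Summable fun n : ℕ+ => (1 + ((n : ℕ) : ℝ)) ^ 2 * |V n|)
    (Ψ : NSeq)
    (hΨ1 : Summable fun n : ℕ+ => (1 + ((n : ℕ) : ℝ))⁻¹ * ‖Ψ n‖)
    (hΨ2 : ∀ n : ℕ+, H0seq Ψ n + (V n : ℂ) * Ψ n = 0) :
    Ψ = 0 := by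
  classical
  set ψ : ℕ → ℂ := fun n => if h : 0 < n then Ψ ⟨n, h⟩ else 0 with hψdef
  set v : ℕ → ℝ := fun n => if h : 0 < n then V ⟨n, h⟩ else 0 with hvdef
  have hψ0 : ψ 0 = 0 := by simp [hψdef]
  have hpsi_coe : ∀ m : ℕ+, Ψ m = ψ (m : ℕ) := by
    intro m
    simp only [hψdef]
    rw [dif_pos m.pos]
    rfl
  have hv_coe : ∀ m : ℕ+, V m = v (m : ℕ) := by
    intro m
    simp only [hvdef]
    rw [dif_pos m.pos]
    rfl
  have hinj : Function.Injective (fun m : ℕ+ => (m : ℕ)) := fun a b h => PNat.coe_injective h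
  -- transported summability
  have hv2 : Summable (fun n : ℕ => (1 + (n : ℝ)) ^ 2 * |v n|) := by
    refine (hinj.summable_iff ?_).1 ?_
    · intro x hx
      have hx0 : x = 0 := by
        by_contra h
        exact hx ⟨⟨x, Nat.pos_of_ne_zero h⟩, rfl⟩
      simp [hx0, hvdef]
    · refine hV.congr fun m => ?_
      simp [Function.comp, hv_coe m]
  have hF : Summable (fun n : ℕ => (1 + (n : ℝ))⁻¹ * ‖ψ n‖) := by
    refine (hinj.summable_iff ?_).1 ?_
    · intro x hx
      have hx0 : x = 0 := by
        by_contra h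
        exact hx ⟨⟨x, Nat.pos_of_ne_zero h⟩, rfl⟩
      simp [hx0, hψdef]
    · refine hΨ1.congr fun m => ?_
      simp [Function.comp, hpsi_coe m]
  -- linear bound on ψ
  obtain ⟨C, hC0, hCb⟩ : ∃ C : ℝ, 0 ≤ C ∧ ∀ n : ℕ, ‖ψ n‖ ≤ C * (1 + n) := by
    obtain ⟨C, hC⟩ := hF.tendsto_atTop_zero.bddAbove_range
    have hub : ∀ n : ℕ, (1 + (n : ℝ))⁻¹ * ‖ψ n‖ ≤ C := fun n => hC ⟨n, rfl⟩
    refine ⟨C, le_trans ?_ (hub 0), fun n => ?_⟩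
    · simp [hψ0]
    · have hpos : (0:ℝ) < 1 + n := by positivity
      have h2 := mul_le_mul_of_nonneg_left (hub n) hpos.le
      rw [← mul_assoc, mul_inv_cancel₀ hpos.ne', one_mul] at h2
      rw [mul_comm] at h2
      exact h2
  set g : ℕ → ℂ := fun n => (v n : ℂ) * ψ n with hgdef
  have hgnorm : ∀ n, ‖g n‖ = |v n| * ‖ψ n‖ := by
    intro n; simp [hgdef, Complex.norm_real]
  have hgs : Summable (fun m : ℕ => ‖g m‖) := by
    refine Summable.of_nonneg_of_le (fun m => norm_nonneg _) (fun m => ?_) (hv2.mul_left C)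
    rw [hgnorm]
    have h1 : ‖ψ m‖ ≤ C * (1 + m) := hCb m
    have h2 : (0:ℝ) ≤ |v m| := abs_nonneg _
    have key : (0:ℝ) ≤ C * |v m| * ((1 + (m:ℝ)) * m) := by positivity
    nlinarith [mul_le_mul_of_nonneg_left h1 h2, key]
  have hg : Summable g := Summable.of_norm hgs
  have hgm : Summable (fun m : ℕ => (m : ℝ) * ‖g m‖) := by
    refine Summable.of_nonneg_of_le (fun m => by positivity) (fun m => ?_) (hv2.mul_left C)
    rw [hgnorm, ← mul_assoc]
    have h1 : ‖ψ m‖ ≤ C * (1 + m) := hCb m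
    have h2 : (0:ℝ) ≤ (m:ℝ) * |v m| := by positivity
    have key : (0:ℝ) ≤ C * |v m| * (1 + (m:ℝ)) := by positivity
    nlinarith [mul_le_mul_of_nonneg_left h1 h2, key]
  -- the recurrence
  have hrec : ∀ n : ℕ, ψ (n + 2) = 2 * ψ (n + 1) - ψ n + g (n + 1) := by
    have hne : ∀ (m : ℕ) (hh : 0 < m + 2), (⟨m + 2, hh⟩ : ℕ+) ≠ 1 := by
      intro m hh hc
      have := congrArg (fun x : ℕ+ => (x : ℕ)) hc
      change m + 2 = 1 at this; omega
    have hsub : ∀ p : ℕ+, 1 < p → ((p - 1 : ℕ+) : ℕ) = (p : ℕ) - 1 := by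
      intro p hp
      rw [PNat.sub_coe, if_pos hp]
      simp
    intro n
    have h := hΨ2 ⟨n + 1, n.succ_pos⟩
    simp only [H0seq] at h
    rcases n with _ | k
    · have h1 := hΨ2 1
      simp only [H0seq, if_pos rfl, ↓reduceIte, hpsi_coe, hv_coe, PNat.add_coe, PNat.one_coe, sub_zero] at h1
      simp only [hψ0, hgdef]
      ring_nf at h1 ⊢
      linear_combination -h1
    · have h1 := hΨ2 (k + 1).succPNat
      have hne1 : (k + 1).succPNat ≠ 1 := by
        intro hc
        have := congrArg PNat.val hc
        change k + 1 + 1 = 1 at this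
        omega
      have hp : (1 : ℕ+) < (k + 1).succPNat := by
        rw [← PNat.coe_lt_coe, PNat.one_coe, Nat.succPNat_coe]; omega
      simp only [H0seq, if_neg hne1, hpsi_coe, hv_coe] at h1
      rw [hsub _ hp] at h1
      simp only [PNat.add_coe, PNat.one_coe, Nat.succPNat_coe, Nat.succ_eq_add_one, Nat.add_sub_cancel] at h1
      simp only [hgdef]
      ring_nf at h1 ⊢
      linear_combination -h1
  -- the difference sequence
  set a : ℕ → ℂ := fun n => ψ (n + 1) - ψ n with hadef
  have ha_step : ∀ n, a (n + 1) = a n + g (n + 1) := by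
    intro n
    simp only [hadef]
    rw [hrec n]
    ring
  have ha_sum : ∀ n, a n = a 0 + ∑ k ∈ Finset.range n, g (k + 1) := by
    intro n
    induction n with
    | zero => simp
    | succ k ih => rw [ha_step, ih, Finset.sum_range_succ]; ring
  have hg1s : Summable fun k : ℕ => g (k + 1) := (summable_nat_add_iff 1).2 hg
  have hg1sn : Summable fun k : ℕ => ‖g (k + 1)‖ := (summable_nat_add_iff 1).2 hgs
  have hψ_sum : ∀ n, ψ n = ∑ k ∈ Finset.range n, a k := by
    intro n
    rw [show (∑ k ∈ Finset.range n, a k) = ∑ k ∈ Finset.range n, (ψ (k+1) - ψ k) from rfl,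
      Finset.sum_range_sub, hψ0, sub_zero]
  -- the tail majorant t
  set t : ℕ → ℝ := fun n => ∑' k : ℕ, ‖g (k + (n + 1))‖ with htdef
  have ht_nonneg : ∀ n, 0 ≤ t n := fun n => tsum_nonneg (fun k => norm_nonneg _)
  have htail_sm : ∀ n : ℕ, Summable fun k : ℕ => ‖g (k + (n + 1))‖ :=
    fun n => (summable_nat_add_iff (n + 1)).2 hgs
  have htail_smg : ∀ n : ℕ, Summable fun k : ℕ => g (k + (n + 1)) :=
    fun n => (summable_nat_add_iff (n + 1)).2 hg
  have tind : ∀ n, t n = ∑' m : ℕ, (if n < m then ‖g m‖ else 0) := by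
    intro n
    have hi : Function.Injective (fun k : ℕ => k + (n + 1)) := add_left_injective (n + 1)
    have hsupp : Function.support (fun m : ℕ => if n < m then ‖g m‖ else 0) ⊆
        Set.range (fun k : ℕ => k + (n + 1)) := by
      intro m hm
      have hnm : n < m := by
        by_contra hc
        simp only [Function.mem_support, if_neg hc, ne_eq, not_true_eq_false] at hm
      exact ⟨m - (n + 1), show m - (n + 1) + (n + 1) = m by omega⟩
    rw [htdef]
    rw [← hi.tsum_eq hsupp]
    refine tsum_congr fun k => ?_
    have hlt : n < k + (n + 1) := by omega
    simp [hlt]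
  have hind_sm : ∀ n : ℕ, Summable (fun m : ℕ => if n < m then ‖g m‖ else 0) := by
    intro n
    refine Summable.of_nonneg_of_le (fun m => ?_) (fun m => ?_) hgs
    · split <;> simp [norm_nonneg]
    · split <;> simp [norm_nonneg]
  have hindm_sm : ∀ n : ℕ, Summable (fun m : ℕ => if n < m then (m : ℝ) * ‖g m‖ else 0) := by
    intro n
    refine Summable.of_nonneg_of_le (fun m => ?_) (fun m => ?_) hgm
    · split <;> positivity
    · split
      · exact le_refl _
      · positivity
  -- counting estimate
  have hcount : ∀ n K : ℕ, ∑ k ∈ Finset.range K, t (n + k)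
      ≤ ∑' m : ℕ, (if n < m then (m : ℝ) * ‖g m‖ else 0) := by
    intro n K
    have step1 : ∑ k ∈ Finset.range K, t (n + k)
        = ∑' m : ℕ, ∑ k ∈ Finset.range K, (if n + k < m then ‖g m‖ else 0) := by
      rw [Summable.tsum_finsetSum (fun i _ => hind_sm (n + i))]
      exact Finset.sum_congr rfl fun k _ => tind (n + k)
    rw [step1]
    refine Summable.tsum_le_tsum (fun m => ?_) ?_ (hindm_sm n)
    · by_cases hm : n < m
      · rw [if_pos hm]
        rw [← Finset.sum_filter, Finset.sum_const, nsmul_eq_mul]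
        refine mul_le_mul_of_nonneg_right ?_ (norm_nonneg _)
        have hss : (Finset.range K).filter (fun k => n + k < m) ⊆ Finset.range m := by
          intro k hk
          rw [Finset.mem_filter] at hk
          rw [Finset.mem_range]
          omega
        have := Finset.card_le_card hss
        rw [Finset.card_range] at this
        exact_mod_cast this
      · rw [if_neg hm]
        refine le_of_eq (Finset.sum_eq_zero fun k _ => ?_)
        rw [if_neg (by omega)]
    · exact summable_sum (fun i _ => hind_sm (n + i))
  have ht_sm : Summable t := by
    refine summable_of_sum_range_le (c := ∑' m : ℕ, (if 0 < m then (m : ℝ) * ‖g m‖ else 0))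
      ht_nonneg (fun K => ?_)
    have := hcount 0 K
    simpa using this
  -- the limit L of the differences, and L = 0
  set L : ℂ := a 0 + ∑' k : ℕ, g (k + 1) with hLdef
  have haL' : ∀ n, a n = L - ∑' k : ℕ, g (k + (n + 1)) := by
    intro n
    have h := Summable.sum_add_tsum_nat_add n hg1s
    have h2 : ∑' i : ℕ, g (i + n + 1) = ∑' i : ℕ, g (i + (n + 1)) := rfl
    rw [h2] at h
    rw [ha_sum n, hLdef]
    linear_combination h
  have haL2 : ∀ n, ‖a n - L‖ ≤ t n := by
    intro n
    rw [haL' n]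
    rw [show L - ∑' k : ℕ, g (k + (n + 1)) - L = -∑' k : ℕ, g (k + (n + 1)) by ring]
    rw [norm_neg]
    exact (norm_tsum_le_tsum_norm (htail_sm n))
  have he_sm : Summable (fun k => a k - L) :=
    Summable.of_norm (Summable.of_nonneg_of_le (fun k => norm_nonneg _) haL2 ht_sm)
  -- ψ n / (1+n) tends to L
  have hψn : ∀ n : ℕ, ψ n = (∑ k ∈ Finset.range n, (a k - L)) + n * L := by
    intro n
    induction n with
    | zero => simpa using hψ0
    | succ m ih =>
      rw [Finset.sum_range_succ]
      rw [show ψ (m + 1) = ψ m + a m from by rw [hadef]; ring, ih]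
      push_cast
      ring
  have htend1 : Filter.Tendsto (fun n : ℕ => ψ n / (1 + n)) Filter.atTop (nhds L) := by
    have hE : Filter.Tendsto (fun n : ℕ => ∑ k ∈ Finset.range n, (a k - L)) Filter.atTop
        (nhds (∑' k, (a k - L))) := he_sm.hasSum.tendsto_sum_nat
    have hinv : Filter.Tendsto (fun n : ℕ => ((1 : ℂ) + n)⁻¹) Filter.atTop (nhds 0) := by
      have h1 : Filter.Tendsto (fun n : ℕ => ((1:ℝ) + n)⁻¹) Filter.atTop (nhds 0) :=
        tendsto_one_div_add_atTop_nhds_zero_nat.congr (fun n => by rw [one_div, add_comm])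
      rw [tendsto_zero_iff_norm_tendsto_zero]
      refine h1.congr fun n => ?_
      rw [show ((1:ℂ) + n) = (((1:ℝ) + n : ℝ) : ℂ) by push_cast; ring, norm_inv,
        Complex.norm_real, Real.norm_of_nonneg (show (0:ℝ) ≤ 1 + n by positivity)]
    have hne' : ∀ n : ℕ, ((1 : ℂ) + n) ≠ 0 := by
      intro n
      intro hc
      have := congrArg Complex.re hc
      simp at this
      linarith [Nat.cast_nonneg (α := ℝ) n]
    have heq : ∀ n : ℕ, ψ n / (1 + n)
        = (∑ k ∈ Finset.range n, (a k - L)) * ((1:ℂ) + n)⁻¹ + (1 - ((1:ℂ)+n)⁻¹) * L := by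
      intro n
      rw [hψn n]
      generalize (∑ k ∈ Finset.range n, (a k - L)) = S
      rw [div_eq_iff (hne' n)]
      field_simp [hne' n]
      try ring
    have h1 : Filter.Tendsto
        (fun n : ℕ => (∑ k ∈ Finset.range n, (a k - L)) * ((1:ℂ) + n)⁻¹ + (1 - ((1:ℂ)+n)⁻¹) * L)
        Filter.atTop (nhds ((∑' k, (a k - L)) * 0 + (1 - 0) * L)) := by
      exact ((hE.mul hinv).add (((tendsto_const_nhds.sub hinv)).mul tendsto_const_nhds))
    rw [show (∑' k, (a k - L)) * 0 + (1 - 0) * L = L by ring] at h1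
    exact h1.congr (fun n => (heq n).symm)
  have htend0 : Filter.Tendsto (fun n : ℕ => ψ n / (1 + n)) Filter.atTop (nhds 0) := by
    rw [tendsto_zero_iff_norm_tendsto_zero]
    have heqn : ∀ n : ℕ, ‖ψ n / ((1:ℂ) + n)‖ = (1 + (n : ℝ))⁻¹ * ‖ψ n‖ := by
      intro n
      rw [norm_div, show ((1:ℂ) + n) = (((1:ℝ) + n : ℝ) : ℂ) by push_cast; ring, Complex.norm_real,
        Real.norm_of_nonneg (show (0:ℝ) ≤ 1 + n by positivity), div_eq_inv_mul]
    simp only [heqn]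
    exact hF.tendsto_atTop_zero
  have hL0 : L = 0 := tendsto_nhds_unique htend1 htend0
  -- a is summable and ψ tends to 0
  have ha_norm : ∀ n, ‖a n‖ ≤ t n := by
    intro n
    have h := haL2 n
    rwa [hL0, sub_zero] at h
  have han_sm : Summable (fun n => ‖a n‖) :=
    Summable.of_nonneg_of_le (fun k => norm_nonneg _) ha_norm ht_sm
  have ha_sm : Summable a := Summable.of_norm han_sm
  set M : ℂ := ∑' k : ℕ, a k with hMdef
  have hψtend : Filter.Tendsto ψ Filter.atTop (nhds M) :=
    (ha_sm.hasSum.tendsto_sum_nat).congr (fun n => (hψ_sum n).symm)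
  have hM0 : M = 0 := by
    by_contra hM
    have hnorm : Filter.Tendsto (fun n => ‖ψ n‖) Filter.atTop (nhds ‖M‖) := hψtend.norm
    have hMpos : 0 < ‖M‖ := norm_pos_iff.2 hM
    obtain ⟨N, hN⟩ := (Filter.eventually_atTop).1
      (hnorm.eventually (eventually_gt_nhds (by linarith : ‖M‖/2 < ‖M‖)))
    have h1 : Summable (fun n : ℕ => (1 + ((n + N : ℕ) : ℝ))⁻¹ * ‖ψ (n + N)‖) :=
      (summable_nat_add_iff N).2 hF
    have h2 : Summable (fun n : ℕ => (‖M‖/2) * (1 + ((n + N : ℕ) : ℝ))⁻¹) := by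
      refine Summable.of_nonneg_of_le (fun n => by positivity) (fun n => ?_) h1
      rw [mul_comm]
      exact mul_le_mul_of_nonneg_left (le_of_lt (hN (n + N) (Nat.le_add_left N n)))
        (by positivity)
    have h3 : Summable (fun n : ℕ => (1 + ((n + N : ℕ) : ℝ))⁻¹) := by
      have hne2 : (‖M‖/2) ≠ 0 := by positivity
      exact (summable_mul_left_iff hne2).1 h2
    have h5 : Summable (fun n : ℕ => (((n + (N + 1) : ℕ)) : ℝ)⁻¹) := by
      refine h3.congr fun n => ?_
      congr 1
      push_cast
      ring
    exact Real.not_summable_natCast_inv ((summable_nat_add_iff (N + 1)).1 h5)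
  have hψtail : ∀ n, ψ n = -∑' k : ℕ, a (k + n) := by
    intro n
    have h := Summable.sum_add_tsum_nat_add n ha_sm
    have hz : ∑' k : ℕ, a k = 0 := hMdef.symm.trans hM0
    linear_combination hψ_sum n + h + hz
  -- choose N with small weighted tail of the potential
  obtain ⟨N, hT⟩ : ∃ N : ℕ,
      ∑' m : ℕ, (if N < m then (1 + (m:ℝ))^2 * |v m| else 0) < 1/2 := by
    have htt := tendsto_sum_nat_add (fun m : ℕ => (1 + (m:ℝ))^2 * |v m|)
    obtain ⟨i, hi⟩ := (Filter.eventually_atTop).1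
      (htt.eventually (eventually_lt_nhds (by norm_num : (0:ℝ) < 1/2)))
    refine ⟨i, ?_⟩
    have hi1 := hi (i + 1) (Nat.le_succ i)
    have hinj2 : Function.Injective (fun k : ℕ => k + (i + 1)) := add_left_injective (i + 1)
    have hsupp2 : Function.support (fun m : ℕ => if i < m then (1 + (m:ℝ))^2 * |v m| else 0)
        ⊆ Set.range (fun k : ℕ => k + (i + 1)) := by
      intro m hm
      have him : i < m := by
        by_contra hc
        simp only [Function.mem_support, if_neg hc, ne_eq, not_true_eq_false] at hm
      exact ⟨m - (i + 1), show m - (i + 1) + (i + 1) = m by omega⟩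
    rw [← hinj2.tsum_eq hsupp2]
    refine lt_of_le_of_lt (le_of_eq (tsum_congr fun k => ?_)) hi1
    exact if_pos (by omega)
  -- the sup of the tail of ψ
  have hψ0tend : Filter.Tendsto ψ Filter.atTop (nhds 0) := by
    rw [← hM0]; exact hψtend
  have hshift : Filter.Tendsto (fun k : ℕ => ‖ψ (k + (N + 1))‖) Filter.atTop (nhds 0) := by
    have h1 : Filter.Tendsto (fun k : ℕ => ψ (k + (N + 1))) Filter.atTop (nhds 0) :=
      (Filter.tendsto_add_atTop_iff_nat (N + 1)).2 hψ0tend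
    simpa using h1.norm
  have hbdd : BddAbove (Set.range fun k : ℕ => ‖ψ (k + (N + 1))‖) := hshift.bddAbove_range
  set S : ℝ := ⨆ k : ℕ, ‖ψ (k + (N + 1))‖ with hSdef
  have hSle : ∀ k : ℕ, ‖ψ (k + (N + 1))‖ ≤ S := fun k => le_ciSup hbdd k
  have hS0 : 0 ≤ S := le_trans (norm_nonneg _) (hSle 0)
  have hψmS : ∀ m : ℕ, N < m → ‖ψ m‖ ≤ S := by
    intro m hm
    have h := hSle (m - (N + 1))
    rwa [show m - (N + 1) + (N + 1) = m by omega] at h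
  -- the key contraction estimate
  have hkey : ∀ n : ℕ, N < n → ‖ψ n‖ ≤ S * (1/2) := by
    intro n hn
    have htailn : Summable (fun k : ℕ => ‖a (k + n)‖) := (summable_nat_add_iff n).2 han_sm
    have h1 : ‖ψ n‖ ≤ ∑' k : ℕ, ‖a (k + n)‖ := by
      rw [hψtail n, norm_neg]
      exact norm_tsum_le_tsum_norm htailn
    refine h1.trans ?_
    refine Summable.tsum_le_of_sum_range_le htailn (fun K => ?_)
    have hrhs_sm : Summable (fun m : ℕ => if N < m then ((1 + (m:ℝ))^2 * |v m|) * S else 0) := by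
      refine Summable.of_nonneg_of_le (fun m => ?_) (fun m => ?_) (hv2.mul_right S)
      · by_cases hm2 : N < m
        · rw [if_pos hm2]; exact mul_nonneg (by positivity) hS0
        · rw [if_neg hm2]
      · by_cases hm2 : N < m
        · rw [if_pos hm2]
        · rw [if_neg hm2]; exact mul_nonneg (by positivity) hS0
    calc ∑ k ∈ Finset.range K, ‖a (k + n)‖
        ≤ ∑ k ∈ Finset.range K, t (n + k) := by
          refine Finset.sum_le_sum fun k _ => ?_
          rw [show k + n = n + k from Nat.add_comm k n]
          exact ha_norm (n + k)
      _ ≤ ∑' m : ℕ, (if n < m then (m:ℝ) * ‖g m‖ else 0) := hcount n K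
      _ ≤ ∑' m : ℕ, (if N < m then ((1 + (m:ℝ))^2 * |v m|) * S else 0) := by
          refine Summable.tsum_le_tsum (fun m => ?_) (hindm_sm n) hrhs_sm
          by_cases hm : n < m
          · rw [if_pos hm, if_pos (lt_trans hn hm)]
            rw [hgnorm m]
            have hψS := hψmS m (lt_trans hn hm)
            have h2 : (0:ℝ) ≤ |v m| := abs_nonneg _
            have h4 : (0:ℝ) ≤ |v m| * S * (1 + (m:ℝ) + (m:ℝ)^2) := by
              have := mul_nonneg (mul_nonneg h2 hS0)
                (by positivity : (0:ℝ) ≤ 1 + (m:ℝ) + (m:ℝ)^2)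
              exact this
            nlinarith [mul_le_mul_of_nonneg_left hψS
              (mul_nonneg (Nat.cast_nonneg m) h2), h4, norm_nonneg (ψ m)]
          · rw [if_neg hm]
            by_cases hm2 : N < m
            · rw [if_pos hm2]; exact mul_nonneg (by positivity) hS0
            · rw [if_neg hm2]
      _ = (∑' m : ℕ, (if N < m then (1 + (m:ℝ))^2 * |v m| else 0)) * S := by
          rw [← tsum_mul_right]
          refine tsum_congr fun m => ?_
          by_cases hm2 : N < m
          · rw [if_pos hm2, if_pos hm2]
          · rw [if_neg hm2, if_neg hm2, zero_mul]
      _ ≤ (1/2) * S := mul_le_mul_of_nonneg_right (le_of_lt hT) hS0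
      _ = S * (1/2) := by ring
  have hS12 : S ≤ S * (1/2) := ciSup_le fun k => hkey (k + (N + 1)) (by omega)
  have hSz : S = 0 := le_antisymm (by linarith) hS0
  have hzero_tail : ∀ m : ℕ, N < m → ψ m = 0 := by
    intro m hm
    have h := hkey m hm
    rw [hSz] at h
    simpa using norm_le_zero_iff.1 (by simpa using h)
  -- downward induction
  have hdown : ∀ j : ℕ, ψ (N + 1 - j) = 0 ∧ ψ (N + 2 - j) = 0 := by
    intro j
    induction j with
    | zero => exact ⟨hzero_tail _ (by omega), hzero_tail _ (by omega)⟩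
    | succ k ih =>
      obtain ⟨ih1, ih2⟩ := ih
      constructor
      · by_cases hk : k ≤ N
        · have e1 : N + 1 - (k + 1) = N - k := by omega
          rw [e1]
          have h := hrec (N - k)
          have e2 : N - k + 1 = N + 1 - k := by omega
          have e3 : N - k + 2 = N + 2 - k := by omega
          rw [e2, e3, ih1, ih2] at h
          have hg0 : g (N + 1 - k) = 0 := by
            show (v (N + 1 - k) : ℂ) * ψ (N + 1 - k) = 0
            rw [ih1, mul_zero]
          rw [hg0] at h
          linear_combination h
        · have e1 : N + 1 - (k + 1) = 0 := by omega
          rw [e1]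
          exact hψ0
      · have e : N + 2 - (k + 1) = N + 1 - k := by omega
        rw [e]
        exact ih1
  have hall : ∀ n : ℕ, ψ n = 0 := by
    intro n
    rcases le_or_gt n (N + 1) with h | h
    · have h2 := (hdown (N + 1 - n)).1
      rwa [show N + 1 - (N + 1 - n) = n by omega] at h2
    · exact hzero_tail n (by omega)
  funext m
  show Ψ m = 0
  rw [hpsi_coe m]
  exact hall _
end
end

section
/- Let ℋ and 𝒦 be complex Hilbert spaces, H₀ ∈ B(ℋ) self-adjoint, v ∈ B(𝒦,ℋ), and U ∈ B(𝒦) with U* = U and U² = I. Set V = vUv* and H = H₀ + V. Let z ∈ ℂ be such that both H₀ − z and H − z are boundedly invertible, and write R₀ = (H₀ − z)⁻¹ and R = (H − z)⁻¹. Then the operator M := U + v*R₀v is boundedly invertible on 𝒦 with M⁻¹ = U − U·v*·R·v·U, and moreover R = R₀ − R₀·v·M⁻¹·v*·R₀. -/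
noncomputable section

open ContinuousLinearMap

/-- Second resolvent identities for factored perturbations V = vUv*:
M = U + v*R₀v is boundedly invertible with M⁻¹ = U − U v* R v U, and
R = R₀ − R₀ v M⁻¹ v* R₀. -/
theorem factored_resolvent_identities {ℋ 𝒦 : Type*}
    [NormedAddCommGroup ℋ] [InnerProductSpace ℂ ℋ] [CompleteSpace ℋ]
    [NormedAddCommGroup 𝒦] [InnerProductSpace ℂ 𝒦] [CompleteSpace 𝒦]
    (H₀ : ℋ →L[ℂ] ℋ) (hH₀ : IsSelfAdjoint H₀)
    (v : 𝒦 →L[ℂ] ℋ) (U : 𝒦 →L[ℂ] 𝒦) (hU : IsSelfAdjoint U) (hU2 : U ∘L U = 1)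
    (z : ℂ)
    (R₀ : ℋ →L[ℂ] ℋ) (hR₀l : (H₀ - z • 1) ∘L R₀ = 1) (hR₀r : R₀ ∘L (H₀ - z • 1) = 1)
    (R : ℋ →L[ℂ] ℋ)
    (hRl : (H₀ + v ∘L U ∘L adjoint v - z • 1) ∘L R = 1)
    (hRr : R ∘L (H₀ + v ∘L U ∘L adjoint v - z • 1) = 1) :
    (U + adjoint v ∘L R₀ ∘L v) ∘L (U - U ∘L adjoint v ∘L R ∘L v ∘L U) = 1 ∧
    (U - U ∘L adjoint v ∘L R ∘L v ∘L U) ∘L (U + adjoint v ∘L R₀ ∘L v) = 1 ∧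
    R = R₀ - R₀ ∘L v ∘L (U - U ∘L adjoint v ∘L R ∘L v ∘L U) ∘L adjoint v ∘L R₀ := by
  set w := adjoint v with hw
  set A := H₀ - z • 1 with hA
  set V := v ∘L U ∘L w with hV
  have hB : H₀ + V - z • 1 = A + V := by rw [hA]; abel
  rw [hB] at hRl hRr
  have hUU : U * U = 1 := hU2
  -- key resolvent identities
  have key1 : R₀ - R = R₀ * (V * R) := by
    have h1 : R₀ * ((A + V) * R) = R₀ := by
      rw [show (A + V) * R = 1 from hRl, mul_one]
    have h2 : R₀ * A = 1 := hR₀r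
    calc R₀ - R = R₀ * ((A + V) * R) - (R₀ * A) * R := by rw [h1, h2, one_mul]
      _ = R₀ * (V * R) := by noncomm_ring
  have key2 : R₀ - R = R * (V * R₀) := by
    have h1 : (R * (A + V)) * R₀ = R₀ := by
      rw [show R * (A + V) = 1 from hRr, one_mul]
    have h2 : A * R₀ = 1 := hR₀l
    calc R₀ - R = (R * (A + V)) * R₀ - R * (A * R₀) := by rw [h1, h2, mul_one]
      _ = R * (V * R₀) := by noncomm_ring
  set p : 𝒦 →L[ℂ] 𝒦 := w ∘L (R₀ ∘L v) with hp
  set q : 𝒦 →L[ℂ] 𝒦 := w ∘L (R ∘L v) with hq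
  have keyp : p - q = p * (U * q) := by
    have : w ∘L ((R₀ - R) ∘L v) = p - q := by
      rw [sub_comp, comp_sub]
    rw [← this, key1]
    rw [hp, hq, hV]
    simp only [mul_def, comp_assoc]
  have keyq : p - q = q * (U * p) := by
    have : w ∘L ((R₀ - R) ∘L v) = p - q := by
      rw [sub_comp, comp_sub]
    rw [← this, key2]
    rw [hp, hq, hV]
    simp only [mul_def, comp_assoc]
  refine ⟨?_, ?_, ?_⟩
  · show (U + p) * (U - U * (q * U)) = 1
    calc (U + p) * (U - U * (q * U))
        = U * U + p * U - (U * U) * (q * U) - (p * (U * q)) * U := by noncomm_ring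
      _ = 1 := by rw [hUU, ← keyp]; noncomm_ring
  · show (U - U * (q * U)) * (U + p) = 1
    calc (U - U * (q * U)) * (U + p)
        = U * U + U * p - (U * q) * (U * U) - U * (q * (U * p)) := by noncomm_ring
      _ = 1 := by rw [hUU, ← keyq]; noncomm_ring
  · have expand : R₀ ∘L v ∘L (U - U ∘L w ∘L R ∘L v ∘L U) ∘L w ∘L R₀
        = R₀ * (V * R₀) - R₀ * (V * (R * (V * R₀))) := by
      simp only [mul_def, hV, comp_sub, sub_comp, comp_assoc]
    rw [expand, show R * (V * R₀) = R₀ - R from key2.symm]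
    have : R₀ * (V * R₀) - R₀ * (V * (R₀ - R)) = R₀ * (V * R) := by noncomm_ring
    rw [this, ← key1]
    abel
end
end

section
/- Let 𝒦 be a complex Hilbert space, A ∈ B(𝒦), and Q ∈ B(𝒦) an orthogonal projection (Q* = Q and Q² = Q). Suppose A + Q is boundedly invertible, and set a := Q − Q·(A+Q)⁻¹·Q. Suppose there exists b ∈ B(𝒦) with b = Q·b·Q and a·b = b·a = Q (i.e. a is invertible in B(Q𝒦) with inverse b). Then A is boundedly invertible and A⁻¹ = (A+Q)⁻¹ + (A+Q)⁻¹·b·(A+Q)⁻¹. -/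
noncomputable section

open ContinuousLinearMap

/-- The Jensen–Nenciu inversion formula: if A + Q is boundedly invertible, where Q is an
orthogonal projection, and a := Q − Q(A+Q)⁻¹Q is invertible in B(Q𝒦) with inverse b,
then A is boundedly invertible with A⁻¹ = (A+Q)⁻¹ + (A+Q)⁻¹ b (A+Q)⁻¹. -/
theorem jensen_nenciu_inversion {𝒦 : Type*}
    [NormedAddCommGroup 𝒦] [InnerProductSpace ℂ 𝒦] [CompleteSpace 𝒦]
    (A Q : 𝒦 →L[ℂ] 𝒦) (hQsa : IsSelfAdjoint Q) (hQproj : Q ∘L Q = Q)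
    (S : 𝒦 →L[ℂ] 𝒦) (hS1 : (A + Q) ∘L S = 1) (hS2 : S ∘L (A + Q) = 1)
    (b : 𝒦 →L[ℂ] 𝒦) (hb : b = Q ∘L b ∘L Q)
    (hab1 : (Q - Q ∘L S ∘L Q) ∘L b = Q) (hab2 : b ∘L (Q - Q ∘L S ∘L Q) = Q) :
    A ∘L (S + S ∘L b ∘L S) = 1 ∧ (S + S ∘L b ∘L S) ∘L A = 1 := by
  simp only [← ContinuousLinearMap.mul_def] at *
  have hQb : Q * b = b := by
    conv_lhs => rw [hb, ← mul_assoc, hQproj]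
    rw [← hb]
  have hbQ : b * Q = b := by
    conv_lhs => rw [hb, mul_assoc, mul_assoc, hQproj]
    rw [← hb]
  constructor
  · have h1 : b - Q * (S * b) = Q := by
      have h := hab1
      rwa [sub_mul, mul_assoc, mul_assoc, hQb] at h
    calc A * (S + S * (b * S))
        = ((A + Q) * S) + ((A + Q) * S) * (b * S) - Q * S - (Q * S) * (b * S) := by
          noncomm_ring
      _ = 1 + (b - Q * (S * b)) * S - Q * S := by rw [hS1]; noncomm_ring
      _ = 1 := by rw [h1]; noncomm_ring
  · have h2 : b - b * (S * Q) = Q := by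
      have h := hab2
      rwa [mul_sub, ← mul_assoc b Q, hbQ] at h
    calc (S + S * (b * S)) * A
        = (S * (A + Q)) + (S * b) * (S * (A + Q)) - S * Q - (S * b) * (S * Q) := by
          noncomm_ring
      _ = 1 + S * (b - b * (S * Q)) - S * Q := by rw [hS2]; noncomm_ring
      _ = 1 := by rw [h2]; noncomm_ring
end
end
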